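/- If δ is uniformly distributed on (0,1) and w ∈ ℝ, then as the temperature τ → 0+, the random variable Sigmoid((log δ − log(1−δ) + w)/τ) converges in distribution to a Bernoulli random variable with success probability Sigmoid(w). -/

import Mathlib

open Real MeasureTheory

/-- The logistic sigmoid `1/(1+e^{-x})`. -/
noncomputable def sigmoid (x : ℝ) : ℝ := 1 / (1 + Real.exp (-x))

/-- CDF of a Bernoulli random variable with success probability `q`
(valued in `{0,1} ⊆ ℝ`). -/
noncomputable def bernoulliCDF (q x : ℝ) : ℝ :=
  if x < 0 then 0 else if x < 1 then 1 - q else 1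

/-!
For `δ ∈ (0, 1)` the logit `ℓ δ = log δ - log (1 - δ)` is the inverse of the sigmoid `σ`, so for
`τ > 0` and `x ∈ (0, 1)` the event `σ ((ℓ δ + w) / τ) ≤ x` is `ℓ δ ≤ τ ℓ x - w`, i.e.
`δ ≤ σ (τ ℓ x - w)`. Its probability is therefore exactly `σ (τ ℓ x - w)`, which is continuous in
`τ` and tends to `σ (-w) = 1 - σ w` as `τ → 0`. For `x < 0` or `x > 1` the event is empty or
certain for every `τ`, since `σ` takes values in `(0, 1)`.
-/

open Set Filter Topology

theorem sigmoid_eq_real_sigmoid : _root_.sigmoid = Real.sigmoid :=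
  funext fun _ => one_div _

namespace Real

noncomputable def logit (x : ℝ) : ℝ := log x - log (1 - x)

theorem sigmoid_logit {x : ℝ} (hx : x ∈ Ioo 0 1) : sigmoid (logit x) = x := by
  have h1x : 0 < 1 - x := sub_pos.2 hx.2
  have hx0 : x ≠ 0 := hx.1.ne'
  rw [logit, sigmoid_def, neg_sub, exp_sub, exp_log hx.1, exp_log h1x]
  field_simp
  ring

theorem sigmoid_le_iff_le_logit {x y : ℝ} (hx : x ∈ Ioo 0 1) : sigmoid y ≤ x ↔ y ≤ logit x := by
  conv_lhs => rw [← sigmoid_logit hx]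
  exact sigmoid_le_iff

theorem logit_le_iff_le_sigmoid {x y : ℝ} (hx : x ∈ Ioo 0 1) : logit x ≤ y ↔ x ≤ sigmoid y := by
  conv_rhs => rw [← sigmoid_logit hx]
  exact sigmoid_le_iff.symm

theorem sigmoid_div_le_iff {δ x τ : ℝ} (w : ℝ) (hδ : δ ∈ Ioo 0 1) (hx : x ∈ Ioo 0 1) (hτ : 0 < τ) :
    sigmoid ((logit δ + w) / τ) ≤ x ↔ δ ≤ sigmoid (τ * logit x - w) := by
  rw [sigmoid_le_iff_le_logit hx, div_le_iff₀ hτ, ← logit_le_iff_le_sigmoid hδ, le_sub_iff_add_le,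
    mul_comm]

theorem volume_Ioo_sigmoid_div_le {x τ : ℝ} (w : ℝ) (hx : x ∈ Ioo 0 1) (hτ : 0 < τ) :
    volume.restrict (Ioo 0 1) {δ | sigmoid ((logit δ + w) / τ) ≤ x} =
      ENNReal.ofReal (sigmoid (τ * logit x - w)) := by
  have hset : {δ | sigmoid ((logit δ + w) / τ) ≤ x} ∩ Ioo 0 1 =
      Ioc 0 (sigmoid (τ * logit x - w)) := by
    ext δ
    constructor
    · rintro ⟨h, hδ⟩
      exact ⟨hδ.1, (sigmoid_div_le_iff w hδ hx hτ).1 h⟩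
    · rintro ⟨hδ₀, hδ⟩
      have hδ' : δ ∈ Ioo 0 1 := ⟨hδ₀, hδ.trans_lt (sigmoid_lt_one _)⟩
      exact ⟨(sigmoid_div_le_iff w hδ' hx hτ).2 hδ, hδ'⟩
  rw [Measure.restrict_apply' measurableSet_Ioo, hset, volume_Ioc, sub_zero]

theorem tendsto_ofReal_sigmoid_mul_sub (a w : ℝ) :
    Tendsto (fun τ => ENNReal.ofReal (sigmoid (τ * a - w))) (𝓝[>] 0)
      (𝓝 (ENNReal.ofReal (sigmoid (-w)))) := by
  have hcont : Continuous fun τ => ENNReal.ofReal (sigmoid (τ * a - w)) :=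
    ENNReal.continuous_ofReal.comp (continuous_sigmoid.comp (by fun_prop))
  simpa using (hcont.tendsto 0).mono_left nhdsWithin_le_nhds

end Real

/-- As the temperature `τ → 0⁺`, the concrete relaxation
`Sigmoid((log δ − log(1−δ) + w)/τ)` with `δ ~ Uniform(0,1)` converges in
distribution to a Bernoulli random variable with success probability
`Sigmoid(w)`: its CDF converges to the Bernoulli CDF at every continuity
point (every `x ∉ {0,1}`). -/
theorem stmt6 (w : ℝ) (x : ℝ) (hx0 : x ≠ 0) (hx1 : x ≠ 1) :
    Filter.Tendsto
      (fun τ : ℝ =>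
        (volume.restrict (Set.Ioo (0:ℝ) 1))
          {δ : ℝ | _root_.sigmoid ((Real.log δ - Real.log (1 - δ) + w) / τ) ≤ x})
      (nhdsWithin 0 (Set.Ioi 0))
      (nhds (ENNReal.ofReal (bernoulliCDF (_root_.sigmoid w) x))) := by
  rw [sigmoid_eq_real_sigmoid]
  rcases hx0.lt_or_gt with hneg | hpos
  · simp [bernoulliCDF, hneg, (hneg.trans (Real.sigmoid_pos _)).not_ge]
  rcases hx1.lt_or_gt with hlt | hgt
  · have hcdf : bernoulliCDF (Real.sigmoid w) x = Real.sigmoid (-w) := by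
      simp [bernoulliCDF, hpos.not_gt, hlt, Real.sigmoid_neg]
    rw [hcdf]
    refine (Real.tendsto_ofReal_sigmoid_mul_sub (Real.logit x) w).congr' ?_
    filter_upwards [self_mem_nhdsWithin] with τ hτ
    exact (Real.volume_Ioo_sigmoid_div_le w ⟨hpos, hlt⟩ hτ).symm
  · simp [bernoulliCDF, hpos.not_gt, hgt.not_gt, ((Real.sigmoid_lt_one _).trans hgt).le]
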